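/- arXiv:2603.13642 — 2 statements merged into one kernel-verified Lean document; each statement's English description precedes it below -/
import Mathlib

section
/- Let μ be a probability measure on the space of functions f : ℤ×ℤ → ℤ×ℤ (with the product σ-algebra) that is invariant under the translation action of ℤ×ℤ, i.e., for every t ∈ ℤ×ℤ the map sending f to the function x ↦ f(x−t) + t is measure preserving for μ. Then for every x ∈ ℤ×ℤ, the expected cardinality of the fiber f⁻¹({x}) (with value in [0,∞]) equals 1; in particular, μ-almost surely every fiber f⁻¹({x}), x ∈ ℤ×ℤ, is finite. -/
open MeasureTheory
open scoped ENNReal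

/-- If `μ` is a probability measure on functions
`f : ℤ×ℤ → ℤ×ℤ` (with the product σ-algebra) invariant under the translation
action `f ↦ (x ↦ f (x - t) + t)`, then for every `x` the expected cardinality
of the fiber `f⁻¹({x})` equals `1`; in particular, almost surely every fiber
is finite. -/
theorem invariant_assignment_expected_fiber_card_eq_one
    (μ : Measure ((ℤ × ℤ) → (ℤ × ℤ))) [IsProbabilityMeasure μ]
    (hinv : ∀ t : ℤ × ℤ,
      MeasurePreserving (fun f : (ℤ × ℤ) → (ℤ × ℤ) => fun x => f (x - t) + t) μ μ) :
    (∀ x : ℤ × ℤ,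
      ∫⁻ f, ∑' y : ℤ × ℤ, (if f y = x then (1 : ℝ≥0∞) else 0) ∂μ = 1) ∧
    (∀ᵐ f ∂μ, ∀ x : ℤ × ℤ, {y : ℤ × ℤ | f y = x}.Finite) := by
  -- measurability of the sets
  have hms : ∀ y x : ℤ × ℤ, MeasurableSet {f : (ℤ × ℤ) → (ℤ × ℤ) | f y = x} := by
    intro y x
    have : {f : (ℤ × ℤ) → (ℤ × ℤ) | f y = x} = (fun f : (ℤ × ℤ) → (ℤ × ℤ) => f y) ⁻¹' {x} := rfl
    rw [this]
    exact measurableSet_preimage (measurable_pi_apply y) (measurableSet_singleton x)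
  have hmeas : ∀ y x : ℤ × ℤ,
      Measurable (fun f : (ℤ × ℤ) → (ℤ × ℤ) => if f y = x then (1 : ℝ≥0∞) else 0) := by
    intro y x
    exact Measurable.ite (hms y x) measurable_const measurable_const
  -- key translation identity
  have key : ∀ y x : ℤ × ℤ,
      μ {f : (ℤ × ℤ) → (ℤ × ℤ) | f y = x} = μ {f | f 0 = x - y} := by
    intro y x
    have h := (hinv y).measure_preimage (hms y x).nullMeasurableSet
    have hset : (fun f : (ℤ × ℤ) → (ℤ × ℤ) => fun z => f (z - y) + y) ⁻¹'
        {f | f y = x} = {f | f 0 = x - y} := by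
      ext f
      simp [Set.mem_preimage, sub_self, eq_sub_iff_add_eq]
    rw [hset] at h
    exact h.symm
  -- total mass: sum over all values of f 0 is 1
  have htot : ∑' w : ℤ × ℤ, μ {f : (ℤ × ℤ) → (ℤ × ℤ) | f 0 = w} = 1 := by
    rw [← measure_iUnion ?_ (fun w => hms 0 w)]
    · have : (⋃ w : ℤ × ℤ, {f : (ℤ × ℤ) → (ℤ × ℤ) | f 0 = w}) = Set.univ := by
        ext f; simp
      rw [this, measure_univ]
    · intro a b hab
      simp only [Set.disjoint_left]
      intro f hf hg
      exact hab (hf.symm.trans hg)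
  -- expected fiber cardinality
  have hexp : ∀ x : ℤ × ℤ,
      ∫⁻ f, ∑' y : ℤ × ℤ, (if f y = x then (1 : ℝ≥0∞) else 0) ∂μ = 1 := by
    intro x
    rw [lintegral_tsum (fun y => (hmeas y x).aemeasurable)]
    have h1 : ∀ y : ℤ × ℤ,
        ∫⁻ f, (if f y = x then (1 : ℝ≥0∞) else 0) ∂μ = μ {f | f y = x} := by
      intro y
      rw [← lintegral_indicator_one (hms y x)]
      congr 1
      ext f
      simp [Set.indicator_apply]
    rw [tsum_congr (fun y => (h1 y).trans (key y x))]
    calc ∑' y : ℤ × ℤ, μ {f : (ℤ × ℤ) → (ℤ × ℤ) | f 0 = x - y}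
        = ∑' w : ℤ × ℤ, μ {f | f 0 = w} := by
          exact ((Equiv.subLeft x).tsum_eq (fun w => μ {f | f 0 = w}))
      _ = 1 := htot
  refine ⟨hexp, ?_⟩
  rw [ae_all_iff]
  intro x
  have hfin : ∀ᵐ f ∂μ, (∑' y : ℤ × ℤ, (if f y = x then (1 : ℝ≥0∞) else 0)) < ⊤ := by
    apply ae_lt_top
    · exact Measurable.ennreal_tsum (fun y => hmeas y x)
    · rw [hexp x]; exact ENNReal.one_ne_top
  filter_upwards [hfin] with f hf
  by_contra hinf
  have hinf : {y : ℤ × ℤ | f y = x}.Infinite := hinf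
  have : (∑' y : ℤ × ℤ, (if f y = x then (1 : ℝ≥0∞) else 0)) = ⊤ := by
    have heq : (fun y : ℤ × ℤ => if f y = x then (1 : ℝ≥0∞) else 0)
        = Set.indicator {y | f y = x} (fun _ => 1) := by
      ext y; simp [Set.indicator_apply]
    rw [heq, ← tsum_subtype]
    haveI := hinf.to_subtype
    exact ENNReal.tsum_const_eq_top_of_ne_zero one_ne_zero
  rw [this] at hf
  exact lt_irrefl _ hf
end

section
/- Let μ be a translation-invariant percolation on ℤ². Then μ-almost surely, for every b ∈ ℤ and every infinite cluster C of the half-plane restriction HP_b(G_η), if the set {x ∈ ℤ : (x,b) ∈ C} is infinite, then it is unbounded above and unbounded below in ℤ (it has no greatest and no least element). -/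
open MeasureTheory

/-- Vertices of the square lattice `ℤ²`. -/
abbrev Vertex : Type := ℤ × ℤ

/-- Edges of `ℤ²`, encoded as a base vertex together with a direction:
`false` is the horizontal edge from `v` to `v + (1,0)`, `true` the vertical
edge from `v` to `v + (0,1)`. -/
abbrev Edge : Type := Vertex × Bool

/-- Percolation configurations `η : E(ℤ²) → {0,1}`. -/
abbrev Config : Type := Edge → Bool

/-- The displacement vector of an edge with direction `d`. -/
def edgeDir (d : Bool) : Vertex := if d then (0, 1) else (1, 0)

/-- `joins e u v` says that the edge `e` has endpoints `u` and `v`. -/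
def joins (e : Edge) (u v : Vertex) : Prop :=
  (e.1 = u ∧ u + edgeDir e.2 = v) ∨ (e.1 = v ∧ v + edgeDir e.2 = u)

/-- The open subgraph `G_η` of `ℤ²`: two vertices are adjacent iff some open
edge joins them. -/
def openGraph (η : Config) : SimpleGraph Vertex where
  Adj u v := u ≠ v ∧ ∃ e : Edge, η e = true ∧ joins e u v
  symm := by
    constructor
    rintro u v ⟨hne, e, he, hj⟩
    exact ⟨hne.symm, e, he, hj.symm⟩
  loopless := by
    constructor
    rintro u ⟨hne, -⟩
    exact hne rfl

/-- The half-plane restriction `HP_b(G_η)`: keep only open edges with both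
endpoints having second coordinate `≥ b`. -/
def hpGraph (b : ℤ) (η : Config) : SimpleGraph Vertex where
  Adj u v := b ≤ u.2 ∧ b ≤ v.2 ∧ (openGraph η).Adj u v
  symm := by
    constructor
    rintro u v ⟨hu, hv, h⟩
    exact ⟨hv, hu, h.symm⟩
  loopless := by
    constructor
    rintro u ⟨-, -, h⟩
    exact (openGraph η).loopless.irrefl u h

/-- `C` is a cluster (connected component) of `G_η`. -/
def IsCluster (η : Config) (C : Set Vertex) : Prop :=
  ∃ v : Vertex, C = {u | (openGraph η).Reachable v u}

/-- `C` is a cluster of the half-plane restriction `HP_b(G_η)`: the component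
of some vertex lying in the half-plane `{y ≥ b}`. -/
def IsClusterHP (b : ℤ) (η : Config) (C : Set Vertex) : Prop :=
  ∃ v : Vertex, b ≤ v.2 ∧ C = {u | (hpGraph b η).Reachable v u}

/-- The dual configuration `η*`: a dual edge is open iff the primal edge it
crosses is closed.  The dual edge with base `(a,c)` and direction `false`
(going to `(a+1,c)`) crosses the primal vertical edge `{(a+1,c),(a+1,c+1)}`;
the dual edge with base `(a,c)` and direction `true` (going to `(a,c+1)`)
crosses the primal horizontal edge `{(a,c+1),(a+1,c+1)}`. -/
def dualConfig (η : Config) : Config := fun e =>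
  if e.2 then !η ((e.1.1, e.1.2 + 1), false) else !η ((e.1.1 + 1, e.1.2), true)

/-- Translation of configurations: `(T_t η)(e) = η (e - t)`. -/
def shift (t : Vertex) (η : Config) : Config := fun e => η (e.1 - t, e.2)

/-!
Mass transport along the line `y = b`: let each baseline vertex `(x, b)` send unit mass to the
greatest baseline vertex of its half-plane cluster, when there is one. Every vertex sends at
most mass one, so by invariance under horizontal translations the expected mass received by a
fixed `(m, b)` is at most one, and by Borel–Cantelli it receives mass from only finitely many
senders almost surely. An infinite baseline intersection that is bounded above has a greatest
element, which would receive mass from all of its infinitely many points. Least elements are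
handled in the same way.
-/

theorem ae_finite_setOf_mem_of_covariant {α G : Type*} [MeasurableSpace α] [AddGroup G]
    [Countable G] (μ : Measure α) [IsFiniteMeasure μ] (T : G → α → α)
    (hT : ∀ g, MeasurePreserving (T g) μ μ) (E : G → G → Set α)
    (hE : ∀ x y, MeasurableSet (E x y)) (hcov : ∀ g x y, T g ⁻¹' E x y = E (x - g) (y - g))
    (hdisj : ∀ x, Pairwise (Function.onFun Disjoint (E x))) (y : G) :
    ∀ᵐ a ∂μ, {x | a ∈ E x y}.Finite := by
  refine ae_finite_setOfPred_mem <|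
    ne_top_of_le_ne_top (measure_ne_top μ (⋃ z, E 0 z)) (le_of_eq ?_)
  calc ∑' x, μ (E x y) = ∑' x, μ (E 0 (y - x)) := tsum_congr fun x => by
        rw [← (hT x).measure_preimage (hE x y).nullMeasurableSet, hcov, sub_self]
    _ = ∑' z, μ (E 0 z) := (Equiv.subLeft y).tsum_eq fun z => μ (E 0 z)
    _ = μ (⋃ z, E 0 z) := (measure_iUnion (hdisj 0) (hE 0)).symm

section Reachability

variable {α V : Type*} [MeasurableSpace α] (G : α → SimpleGraph V)
  (hG : ∀ u v, MeasurableSet {a | (G a).Adj u v})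
include hG

theorem measurable_isChain_adj : ∀ l : List V, Measurable fun a => l.IsChain (G a).Adj
  | [] | [_] => by simp
  | x :: y :: l => by
    simp only [List.isChain_cons_cons]
    exact (measurableSet_setOfPred.mp (hG x y)).and (measurable_isChain_adj (y :: l))

theorem measurableSet_setOf_reachable [Countable V] (u v : V) :
    MeasurableSet {a | (G a).Reachable u v} := by
  have hchain : {a | (G a).Reachable u v} = {a | ∃ l : List V,
      (u :: l).IsChain (G a).Adj ∧ (u :: l).getLast (List.cons_ne_nil _ _) = v} := by
    ext a
    simp only [SimpleGraph.reachable_iff_reflTransGen]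
    exact ⟨List.exists_isChain_cons_of_relationReflTransGen,
      fun ⟨l, hl, hlast⟩ => List.relationReflTransGen_of_exists_isChain_cons l hl hlast⟩
  rw [hchain]
  exact measurableSet_setOfPred.mpr <|
    .exists fun l => (measurable_isChain_adj G hG _).and measurable_const

end Reachability

theorem measurableSet_hpGraph_adj (b : ℤ) (u v : Vertex) :
    MeasurableSet {η | (hpGraph b η).Adj u v} :=
  measurableSet_setOfPred.mpr (by unfold hpGraph openGraph; fun_prop)

theorem joins_add_iff (e : Edge) (u v t : Vertex) :
    joins (e.1 + t, e.2) (u + t) (v + t) ↔ joins e u v := by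
  simp only [joins, add_left_inj, add_right_comm _ t]

theorem openGraph_shift_adj_add_iff (t : Vertex) (η : Config) (u v : Vertex) :
    (openGraph (shift t η)).Adj (u + t) (v + t) ↔ (openGraph η).Adj u v := by
  refine and_congr (not_congr (add_left_inj t))
    ⟨fun ⟨e, he, hj⟩ => ⟨(e.1 - t, e.2), he, ?_⟩,
      fun ⟨e, he, hj⟩ => ⟨(e.1 + t, e.2), ?_, (joins_add_iff e u v t).mpr hj⟩⟩
  · rw [← joins_add_iff _ _ _ t]; simpa using hj
  · simpa [shift] using he

@[simps!]
def hpGraphIsoShift (b d : ℤ) (η : Config) : hpGraph b η ≃g hpGraph b (shift (d, 0) η) where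
  toEquiv := Equiv.addRight (d, 0)
  map_rel_iff' := by
    simp [hpGraph, openGraph_shift_adj_add_iff]

def baselineCluster (b : ℤ) (η : Config) (x : ℤ) : Set ℤ :=
  {y | (hpGraph b η).Reachable (x, b) (y, b)}

theorem mem_baselineCluster_shift_iff (b d : ℤ) (η : Config) (x y : ℤ) :
    y ∈ baselineCluster b (shift (d, 0) η) x ↔ y - d ∈ baselineCluster b η (x - d) := by
  simpa [baselineCluster] using
    (hpGraphIsoShift b d η).reachable_iff (u := (x - d, b)) (v := (y - d, b))

theorem measurable_mem_baselineCluster (b x y : ℤ) :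
    Measurable fun η => y ∈ baselineCluster b η x :=
  measurableSet_setOfPred.mp <|
    measurableSet_setOf_reachable (hpGraph b) (measurableSet_hpGraph_adj b) _ _

def baselineExtremeEvent (R : ℤ → ℤ → Prop) (b x m : ℤ) : Set Config :=
  {η | m ∈ baselineCluster b η x ∧ ∀ y ∈ baselineCluster b η x, R y m}

section BaselineExtremeEvent

variable (R : ℤ → ℤ → Prop)

theorem measurableSet_baselineExtremeEvent (b x m : ℤ) :
    MeasurableSet (baselineExtremeEvent R b x m) :=
  measurableSet_setOfPred.mpr <| (measurable_mem_baselineCluster b x m).and <|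
    .forall fun y => (measurable_mem_baselineCluster b x y).imp measurable_const

theorem shift_preimage_baselineExtremeEvent (hR : ∀ d a c, R (a - d) (c - d) ↔ R a c)
    (b d x m : ℤ) :
    shift (d, 0) ⁻¹' baselineExtremeEvent R b x m =
      baselineExtremeEvent R b (x - d) (m - d) := by
  ext η
  simp only [baselineExtremeEvent, Set.mem_preimage, Set.mem_ofPred_eq,
    mem_baselineCluster_shift_iff]
  refine and_congr_right fun _ => ⟨fun h y hy => ?_, fun h y hy => (hR d y m).mp (h _ hy)⟩
  simpa using (hR d (y + d) m).mpr (h (y + d) (by simpa using hy))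

theorem pairwise_disjoint_baselineExtremeEvent [Std.Antisymm R] (b x : ℤ) :
    Pairwise (Function.onFun Disjoint (baselineExtremeEvent R b x)) :=
  fun _ _ hne => Set.disjoint_left.mpr fun _ ⟨h₁, h₁'⟩ ⟨h₂, h₂'⟩ =>
    hne (antisymm (h₂' _ h₁) (h₁' _ h₂))

end BaselineExtremeEvent

theorem ae_finite_setOf_mem_baselineExtremeEvent (μ : Measure Config) [IsFiniteMeasure μ]
    (hinv : ∀ t : Vertex, MeasurePreserving (shift t) μ μ)
    (R : ℤ → ℤ → Prop) [Std.Antisymm R] (hR : ∀ d a c, R (a - d) (c - d) ↔ R a c) :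
    ∀ᵐ η ∂μ, ∀ b m, {x | η ∈ baselineExtremeEvent R b x m}.Finite := by
  simp only [ae_all_iff]
  exact fun b => ae_finite_setOf_mem_of_covariant μ (fun d => shift (d, 0)) (fun d => hinv _) _
    (measurableSet_baselineExtremeEvent R b) (shift_preimage_baselineExtremeEvent R hR b)
    (pairwise_disjoint_baselineExtremeEvent R b)

theorem baselineCluster_eq_of_reachable {b : ℤ} {η : Config} {v : Vertex} {x : ℤ}
    (h : (hpGraph b η).Reachable v (x, b)) :
    baselineCluster b η x = {y | (hpGraph b η).Reachable v (y, b)} :=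
  Set.ext fun _ => ⟨h.trans, h.symm.trans⟩

theorem setOf_reachable_subset_baselineExtremeEvent (R : ℤ → ℤ → Prop) {b : ℤ}
    {η : Config} {v : Vertex} {m : ℤ} (hm : (hpGraph b η).Reachable v (m, b))
    (hR : ∀ y, (hpGraph b η).Reachable v (y, b) → R y m) :
    {x | (hpGraph b η).Reachable v (x, b)} ⊆ {x | η ∈ baselineExtremeEvent R b x m} :=
  fun _ hx => by
    rw [Set.mem_ofPred_eq, baselineExtremeEvent, Set.mem_ofPred_eq,
      baselineCluster_eq_of_reachable hx]
    exact ⟨hm, hR⟩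

/-- For a translation-invariant percolation on `ℤ²`, almost
surely, for every `b` and every infinite cluster `C` of `HP_b(G_η)`, if
`C` meets the line `y = b` in infinitely many vertices then this intersection
is unbounded above and unbounded below (no greatest and no least element). -/
theorem infinite_baseline_intersection_unbounded
    (μ : Measure Config) [IsProbabilityMeasure μ]
    (hinv : ∀ t : Vertex, MeasurePreserving (shift t) μ μ) :
    ∀ᵐ η ∂μ, ∀ (b : ℤ) (C : Set Vertex), IsClusterHP b η C → C.Infinite →
      {x : ℤ | (x, b) ∈ C}.Infinite →
      ¬ BddAbove {x : ℤ | (x, b) ∈ C} ∧ ¬ BddBelow {x : ℤ | (x, b) ∈ C} := by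
  filter_upwards [ae_finite_setOf_mem_baselineExtremeEvent μ hinv (· ≤ ·)
      fun d _ _ => sub_le_sub_iff_right d,
    ae_finite_setOf_mem_baselineExtremeEvent μ hinv (· ≥ ·)
      fun d _ _ => sub_le_sub_iff_right d] with η hmax hmin
  rintro b C ⟨v, -, rfl⟩ - hS
  refine ⟨fun hbdd => ?_, fun hbdd => ?_⟩
  · obtain ⟨m, hm, hub⟩ := hbdd.exists_isGreatest_of_nonempty hS.nonempty
    exact hS ((hmax b m).subset (setOf_reachable_subset_baselineExtremeEvent _ hm hub))
  · obtain ⟨m, hm, hlb⟩ := hbdd.exists_isLeast_of_nonempty hS.nonempty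
    exact hS ((hmin b m).subset (setOf_reachable_subset_baselineExtremeEvent _ hm hlb))
end
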